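/- Every induced submap of a Fitch map is a Fitch map: if ε : X×X∖Δ → P(M) is a Fitch map, X' ⊆ X, M' ⊆ M, and ε' : X'×X'∖Δ → P(M') satisfies ε'(x,y) = ε(x,y) for all distinct x,y ∈ X' (with ε(x,y) ⊆ M' on those pairs), then ε' is a Fitch map. -/
import Mathlib


/-- A finite rooted phylogenetic tree on leaf set `X`, with vertex type `V`.
Vertices are encoded via a parent function; `par root = root`. -/
structure PhyloTree (V X : Type) : Type where
  fin : Finite V
  root : V
  par : V → V
  par_root : par root = root
  reach : ∀ v : V, ∃ n : ℕ, par^[n] v = root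
  leaf : X → V
  leaf_inj : Function.Injective leaf
  leaf_isLeaf : ∀ (x : X) (u : V), par u = leaf x → u = leaf x
  leaf_only : ∀ v : V, (∀ u : V, par u = v → u = v) → ∃ x : X, leaf x = v
  root_deg : (∃ x : X, leaf x = root) ∨ 2 ≤ {u : V | par u = root ∧ u ≠ root}.ncard
  inner_deg : ∀ v : V, v ≠ root → (¬ ∃ x : X, leaf x = v) →
      2 ≤ {u : V | par u = v ∧ u ≠ v}.ncard

namespace PhyloTree

variable {V X : Type}

/-- `T.anc u v` : `u` is an ancestor of `v`, i.e. `u ⪯_T v`. -/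
def anc (T : PhyloTree V X) (u v : V) : Prop := ∃ n : ℕ, T.par^[n] v = u

/-- `l` is the last common ancestor of `a` and `b`. -/
def IsLca (T : PhyloTree V X) (l a b : V) : Prop :=
  T.anc l a ∧ T.anc l b ∧ ∀ u : V, T.anc u a → T.anc u b → T.anc u l

/-- The cluster of `v`: the set of leaves below `v`. -/
def cluster (T : PhyloTree V X) (v : V) : Set X := {x : X | T.anc v (T.leaf x)}

/-- The cluster set `C(T)`. -/
def clusterSet (T : PhyloTree V X) : Set (Set X) := {S : Set X | ∃ v : V, S = T.cluster v}

/-- The edge `(par u, u)` lies on the descending path from `a` down to `b`. -/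
def edgeOnDown (T : PhyloTree V X) (a b u : V) : Prop :=
  T.anc a u ∧ u ≠ a ∧ T.anc u b

/-- The edge `(par u, u)` lies on the unique path between `v` and `w`. -/
def edgeOnPath (T : PhyloTree V X) (v w u : V) : Prop :=
  ∃ l : V, T.IsLca l v w ∧ (T.edgeOnDown l v u ∨ T.edgeOnDown l w u)

/-- `T` displays the rooted triple `ab|c`. -/
def Displays (T : PhyloTree V X) (a b c : X) : Prop :=
  ∃ l3 l2 : V, T.IsLca l2 (T.leaf a) (T.leaf b) ∧
    T.IsLca l3 l2 (T.leaf c) ∧ l3 ≠ l2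

end PhyloTree

/-- `(T, lab)` explains `ε` : for distinct leaves `x,y`, `m ∈ ε x y` iff there is an
`m`-edge on the path from `lca(x,y)` down to `y`. -/
def Explains {V X M : Type} (T : PhyloTree V X) (lab : V → Set M)
    (ε : X → X → Set M) : Prop :=
  ∀ x y : X, x ≠ y → ∀ m : M,
    (m ∈ ε x y ↔ ∃ l : V, T.IsLca l (T.leaf x) (T.leaf y) ∧
      ∃ u : V, T.edgeOnDown l (T.leaf y) u ∧ m ∈ lab u)

/-- `ε` is a Fitch map: it is explained by some edge-labeled phylogenetic tree. -/
def IsFitchMap {X M : Type} (ε : X → X → Set M) : Prop :=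
  ∃ (V : Type) (T : PhyloTree V X) (lab : V → Set M), Explains T lab ε

/-- The complementary neighborhood `N_{¬m}[y]`. -/
def Nbr {X M : Type} (ε : X → X → Set M) (m : M) (y : X) : Set X :=
  {x : X | x ≠ y ∧ m ∉ ε x y} ∪ {y}

/-- The collection `N[ε]` of all complementary neighborhoods. -/
def NbrSet {X M : Type} (ε : X → X → Set M) : Set (Set X) :=
  {N : Set X | ∃ (m : M) (y : X), N = Nbr ε m y}

/-- A set system is hierarchy-like if any two members intersect in `∅` or one of them. -/
def HLike {X : Type} (H : Set (Set X)) : Prop :=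
  ∀ P ∈ H, ∀ Q ∈ H, P ∩ Q = P ∨ P ∩ Q = Q ∨ P ∩ Q = ∅

/-- The inequality condition (IC). -/
def IneqCond {X M : Type} (ε : X → X → Set M) : Prop :=
  ∀ (m : M) (y y' : X), y' ∈ Nbr ε m y → (Nbr ε m y').ncard ≤ (Nbr ε m y).ncard


namespace PhyloTree

section Basic

variable {V X : Type} (T : PhyloTree V X)

lemma anc_refl (v : V) : T.anc v v := ⟨0, rfl⟩

lemma anc_trans {a b c : V} (h1 : T.anc a b) (h2 : T.anc b c) : T.anc a c := by
  obtain ⟨n, hn⟩ := h1; obtain ⟨m, hm⟩ := h2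
  exact ⟨n + m, by rw [Function.iterate_add_apply, hm, hn]⟩

lemma anc_root (v : V) : T.anc T.root v := T.reach v

lemma iterate_par_root (n : ℕ) : T.par^[n] T.root = T.root := by
  induction n with
  | zero => rfl
  | succ n ih => rw [Function.iterate_succ_apply', ih, T.par_root]

lemma par_eq_self_iff {v : V} : T.par v = v ↔ v = T.root := by
  constructor
  · intro h
    obtain ⟨n, hn⟩ := T.reach v
    have hit : ∀ m : ℕ, T.par^[m] v = v := by
      intro m
      induction m with
      | zero => rfl
      | succ m ih => rw [Function.iterate_succ_apply, h, ih]
    rw [hit n] at hn; exact hn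
  · rintro rfl; exact T.par_root

noncomputable def depth (v : V) : ℕ :=
  @Nat.find (fun n => T.par^[n] v = T.root) (Classical.decPred _) (T.reach v)

lemma depth_spec (v : V) : T.par^[T.depth v] v = T.root :=
  @Nat.find_spec (fun n => T.par^[n] v = T.root) (Classical.decPred _) (T.reach v)

lemma depth_min {v : V} {n : ℕ} (h : n < T.depth v) : T.par^[n] v ≠ T.root :=
  @Nat.find_min (fun n => T.par^[n] v = T.root) (Classical.decPred _) (T.reach v) n h

lemma depth_par {v : V} (hv : v ≠ T.root) : T.depth v = T.depth (T.par v) + 1 := by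
  have h0 : T.depth v ≠ 0 := by
    intro h
    exact hv (by simpa [h] using T.depth_spec v)
  obtain ⟨k, hk⟩ : ∃ k, T.depth v = k + 1 := ⟨T.depth v - 1, (Nat.succ_pred_eq_of_ne_zero h0).symm⟩
  have hspec : T.par^[k] (T.par v) = T.root := by
    have := T.depth_spec v; rw [hk, Function.iterate_succ_apply] at this; exact this
  have hle : T.depth (T.par v) ≤ k :=
    @Nat.find_min' (fun n => T.par^[n] (T.par v) = T.root) (Classical.decPred _) _ k hspec
  have hge : k ≤ T.depth (T.par v) := by
    by_contra hlt
    push_neg at hlt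
    have := T.depth_min (v := v) (n := T.depth (T.par v) + 1) (by omega)
    exact this (by rw [Function.iterate_succ_apply]; exact T.depth_spec (T.par v))
  omega

lemma depth_lt_of_anc {u v : V} (h : T.anc u v) (hne : u ≠ v) : T.depth u < T.depth v := by
  obtain ⟨n, hn⟩ := h
  induction n generalizing v with
  | zero => exact absurd hn.symm hne
  | succ n ih =>
    by_cases hv : v = T.root
    · subst hv
      rw [T.iterate_par_root] at hn
      exact absurd hn.symm hne
    · have hdv : T.depth v = T.depth (T.par v) + 1 := T.depth_par hv
      rw [Function.iterate_succ_apply] at hn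
      by_cases hup : u = T.par v
      · subst hup; omega
      · have := ih hup hn
        omega

lemma depth_le_of_anc {u v : V} (h : T.anc u v) : T.depth u ≤ T.depth v := by
  by_cases hne : u = v
  · subst hne; exact le_rfl
  · exact (T.depth_lt_of_anc h hne).le

lemma anc_antisymm {u v : V} (h1 : T.anc u v) (h2 : T.anc v u) : u = v := by
  by_contra hne
  have := T.depth_lt_of_anc h1 hne
  have := T.depth_lt_of_anc h2 (Ne.symm hne)
  omega

lemma eq_of_anc_of_depth_le {u v : V} (h : T.anc u v) (hd : T.depth v ≤ T.depth u) : u = v := by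
  by_contra hne
  exact absurd hd (by have := T.depth_lt_of_anc h hne; omega)

lemma anc_comparable {u w v : V} (h1 : T.anc u v) (h2 : T.anc w v) :
    T.anc u w ∨ T.anc w u := by
  obtain ⟨n, hn⟩ := h1; obtain ⟨m, hm⟩ := h2
  rcases le_total n m with hle | hle
  · right
    refine ⟨m - n, ?_⟩
    rw [← hn, ← Function.iterate_add_apply, Nat.sub_add_cancel hle, hm]
  · left
    refine ⟨n - m, ?_⟩
    rw [← hm, ← Function.iterate_add_apply, Nat.sub_add_cancel hle, hn]

lemma leaf_no_desc {x : X} {w : V} (h : T.anc (T.leaf x) w) : w = T.leaf x := by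
  obtain ⟨n, hn⟩ := h
  induction n generalizing w with
  | zero => exact hn
  | succ n ih =>
    rw [Function.iterate_succ_apply'] at hn
    exact ih (T.leaf_isLeaf x _ hn)

lemma lca_exists (a b : V) : ∃ l, T.IsLca l a b := by
  have hfin : ({u : V | T.anc u a ∧ T.anc u b}).Finite := by
    have := T.fin; exact Set.toFinite _
  obtain ⟨l, hl, hmax⟩ := Set.exists_max_image _ T.depth hfin
    ⟨T.root, T.anc_root a, T.anc_root b⟩
  refine ⟨l, hl.1, hl.2, fun u hua hub => ?_⟩
  rcases T.anc_comparable hua hl.1 with h | h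
  · exact h
  · exact (T.eq_of_anc_of_depth_le h (hmax u ⟨hua, hub⟩)).symm ▸ T.anc_refl l

lemma lca_unique {l l' a b : V} (h : T.IsLca l a b) (h' : T.IsLca l' a b) : l = l' :=
  T.anc_antisymm (h'.2.2 l h.1 h.2.1) (h.2.2 l' h'.1 h'.2.1)

lemma isLca_self (a : V) : T.IsLca a a a := ⟨T.anc_refl a, T.anc_refl a, fun _ h _ => h⟩

lemma lca_self_eq {l a : V} (h : T.IsLca l a a) : l = a := T.lca_unique h (T.isLca_self a)

lemma isLca_left {a b : V} (h : T.anc a b) : T.IsLca a a b :=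
  ⟨T.anc_refl a, h, fun _ h _ => h⟩

lemma isLca_comm {l a b : V} (h : T.IsLca l a b) : T.IsLca l b a :=
  ⟨h.2.1, h.1, fun u h1 h2 => h.2.2 u h2 h1⟩

lemma lca_lca {l1 l2 w a b c d : V} (h1 : T.IsLca l1 a b) (h2 : T.IsLca l2 c d)
    (hw : T.IsLca w l1 l2) : w = l1 ∨ w = l2 ∨ T.IsLca w a c := by
  by_cases h12 : T.anc l1 l2
  · exact Or.inl (T.lca_unique hw (T.isLca_left h12))
  by_cases h21 : T.anc l2 l1
  · exact Or.inr (Or.inl (T.lca_unique hw (T.isLca_comm (T.isLca_left h21))))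
  refine Or.inr (Or.inr ⟨T.anc_trans hw.1 h1.1, T.anc_trans hw.2.1 h2.1, fun u hua huc => ?_⟩)
  have hul1 : T.anc u l1 := by
    rcases T.anc_comparable hua h1.1 with h | h
    · exact h
    · exfalso
      have : T.anc l1 c := T.anc_trans h huc
      rcases T.anc_comparable this h2.1 with h' | h'
      · exact h12 h'
      · exact h21 h'
  have hul2 : T.anc u l2 := by
    rcases T.anc_comparable huc h2.1 with h | h
    · exact h
    · exfalso
      have : T.anc l2 a := T.anc_trans h hua
      rcases T.anc_comparable this h1.1 with h' | h'
      · exact h21 h'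
      · exact h12 h'
  exact hw.2.2 u hul1 hul2

end Basic

section Restrict

variable {V X : Type} (T : PhyloTree V X) (X' : Set X)

attribute [local instance] Classical.propDecidable

/-- `v` is the lca of two leaves from `X'`. -/
def Good (v : V) : Prop := ∃ a ∈ X', ∃ b ∈ X', T.IsLca v (T.leaf a) (T.leaf b)

lemma good_leaf {x : X} (hx : x ∈ X') : Good T X' (T.leaf x) :=
  ⟨x, hx, x, hx, T.isLca_self _⟩

lemma good_lca {v1 v2 w : V} (h1 : Good T X' v1) (h2 : Good T X' v2)
    (hw : T.IsLca w v1 v2) : Good T X' w := by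
  obtain ⟨a, ha, b, hb, hl1⟩ := h1
  obtain ⟨c, hc, d, hd, hl2⟩ := h2
  rcases T.lca_lca hl1 hl2 hw with rfl | rfl | hl
  · exact ⟨a, ha, b, hb, hl1⟩
  · exact ⟨c, hc, d, hd, hl2⟩
  · exact ⟨a, ha, c, hc, hl⟩

/-- The strict `Good` ancestors of `v`. -/
def SAnc (v : V) : Set V := {u : V | Good T X' u ∧ T.anc u v ∧ u ≠ v}

noncomputable def spar (v : V) : V :=
  if h : (SAnc T X' v).Nonempty then
    (Set.exists_max_image _ T.depth (by have := T.fin; exact Set.toFinite _) h).choose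
  else v

lemma spar_spec {v : V} (h : (SAnc T X' v).Nonempty) :
    spar T X' v ∈ SAnc T X' v ∧ ∀ w ∈ SAnc T X' v, T.depth w ≤ T.depth (spar T X' v) := by
  rw [spar, dif_pos h]
  exact ⟨(Set.exists_max_image _ T.depth (by have := T.fin; exact Set.toFinite _) h).choose_spec.1,
    (Set.exists_max_image _ T.depth (by have := T.fin; exact Set.toFinite _) h).choose_spec.2⟩

lemma spar_eq_of_empty {v : V} (h : ¬ (SAnc T X' v).Nonempty) : spar T X' v = v :=
  dif_neg h

lemma good_spar {v : V} (hv : Good T X' v) : Good T X' (spar T X' v) := by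
  by_cases h : (SAnc T X' v).Nonempty
  · exact ((spar_spec T X' h).1).1
  · rw [spar_eq_of_empty T X' h]; exact hv

lemma spar_anc (v : V) : T.anc (spar T X' v) v := by
  by_cases h : (SAnc T X' v).Nonempty
  · exact ((spar_spec T X' h).1).2.1
  · rw [spar_eq_of_empty T X' h]; exact T.anc_refl v

lemma spar_max {v w : V} (hw : w ∈ SAnc T X' v) : T.anc w (spar T X' v) := by
  have h : (SAnc T X' v).Nonempty := ⟨w, hw⟩
  obtain ⟨hmem, hmax⟩ := spar_spec T X' h
  rcases T.anc_comparable hw.2.1 hmem.2.1 with hc | hc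
  · exact hc
  · rw [T.eq_of_anc_of_depth_le hc (hmax w hw)]; exact T.anc_refl _

noncomputable def sroot : V :=
  if h : {v : V | Good T X' v}.Nonempty then
    (Set.exists_min_image _ T.depth (by have := T.fin; exact Set.toFinite _) h).choose
  else T.root

lemma sroot_spec (hG : {v : V | Good T X' v}.Nonempty) :
    Good T X' (sroot T X') ∧ ∀ v : V, Good T X' v → T.depth (sroot T X') ≤ T.depth v := by
  rw [sroot, dif_pos hG]
  exact ⟨(Set.exists_min_image _ T.depth (by have := T.fin; exact Set.toFinite _)
      hG).choose_spec.1,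
    (Set.exists_min_image _ T.depth (by have := T.fin; exact Set.toFinite _) hG).choose_spec.2⟩

lemma sroot_good (hG : {v : V | Good T X' v}.Nonempty) : Good T X' (sroot T X') := (sroot_spec T X' hG).1

lemma sroot_anc (hG : {v : V | Good T X' v}.Nonempty) {v : V} (hv : Good T X' v) : T.anc (sroot T X') v := by
  obtain ⟨w, hw⟩ := T.lca_exists (sroot T X') v
  have hwg : Good T X' w := good_lca T X' (sroot_good T X' hG) hv hw
  have h1 : T.depth (sroot T X') ≤ T.depth w := (sroot_spec T X' hG).2 w hwg
  have h2 : w = sroot T X' := T.eq_of_anc_of_depth_le hw.1 h1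
  rw [← h2]; exact hw.2.1

lemma spar_sroot (hG : {v : V | Good T X' v}.Nonempty) : spar T X' (sroot T X') = sroot T X' := by
  apply spar_eq_of_empty
  rintro ⟨u, hug, hua, hune⟩
  exact hune (T.anc_antisymm hua (sroot_anc T X' hG hug))

lemma sanc_nonempty (hG : {v : V | Good T X' v}.Nonempty) {v : V} (hv : Good T X' v) (hne : v ≠ sroot T X') :
    (SAnc T X' v).Nonempty :=
  ⟨sroot T X', sroot_good T X' hG, sroot_anc T X' hG hv, fun h => hne h.symm⟩

lemma spar_lt (hG : {v : V | Good T X' v}.Nonempty) {v : V} (hv : Good T X' v) (hne : v ≠ sroot T X') :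
    spar T X' v ≠ v ∧ T.depth (spar T X' v) < T.depth v := by
  have h := (spar_spec T X' (sanc_nonempty T X' hG hv hne)).1
  exact ⟨h.2.2, T.depth_lt_of_anc h.2.1 h.2.2⟩

/-- `par'` : parent map on `Good` vertices. -/
noncomputable def par' (v : {w : V // Good T X' w}) : {w : V // Good T X' w} :=
  ⟨spar T X' v.val, good_spar T X' v.prop⟩

lemma par'_reach (hG : {v : V | Good T X' v}.Nonempty) (v : {w : V // Good T X' w}) :
    ∃ n : ℕ, (par' T X')^[n] v = ⟨sroot T X', sroot_good T X' hG⟩ := by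
  obtain ⟨k, hk⟩ : ∃ k, T.depth v.val ≤ k := ⟨T.depth v.val, le_rfl⟩
  induction k generalizing v with
  | zero =>
    by_cases hne : v.val = sroot T X'
    · exact ⟨0, Subtype.ext hne⟩
    · exact absurd hk (by have := (spar_lt T X' hG v.prop hne).2; omega)
  | succ k ih =>
    by_cases hne : v.val = sroot T X'
    · exact ⟨0, Subtype.ext hne⟩
    · have hlt := (spar_lt T X' hG v.prop hne).2
      obtain ⟨n, hn⟩ := ih (par' T X' v) (by simpa [par'] using by omega)
      exact ⟨n + 1, by rw [Function.iterate_succ_apply]; exact hn⟩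

lemma exists_child {v : {w : V // Good T X' w}} {x : X} (hx : x ∈ X')
    (hvx : T.anc v.val (T.leaf x)) (hne : v.val ≠ T.leaf x) :
    ∃ u : {w : V // Good T X' w}, par' T X' u = v ∧ u.val ≠ v.val ∧
      T.anc v.val u.val ∧ T.anc u.val (T.leaf x) := by
  classical
  set S : Set V :=
    {w : V | Good T X' w ∧ T.anc v.val w ∧ w ≠ v.val ∧ T.anc w (T.leaf x)} with hS
  have hSne : (T.leaf x) ∈ S :=
    ⟨good_leaf T X' hx, hvx, fun h => hne h.symm, T.anc_refl _⟩
  obtain ⟨u1, hu1, hu1min⟩ := Set.exists_min_image S T.depth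
    (by have := T.fin; exact Set.toFinite _) ⟨_, hSne⟩
  have hvS : v.val ∈ SAnc T X' u1 := ⟨v.prop, hu1.2.1, fun h => hu1.2.2.1 h.symm⟩
  have hspar : spar T X' u1 = v.val := by
    have hmem := (spar_spec T X' ⟨_, hvS⟩).1
    rcases T.anc_comparable hvS.2.1 hmem.2.1 with hc | hc
    · -- v anc spar u1
      by_cases heq : spar T X' u1 = v.val
      · exact heq
      · exfalso
        have hsS : spar T X' u1 ∈ S :=
          ⟨hmem.1, hc, heq, T.anc_trans hmem.2.1 hu1.2.2.2⟩
        have h1 := hu1min _ hsS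
        have h2 := T.depth_lt_of_anc hmem.2.1 hmem.2.2
        omega
    · exact T.anc_antisymm hc (spar_max T X' hvS)
  refine ⟨⟨u1, hu1.1⟩, Subtype.ext hspar, hu1.2.2.1, hu1.2.1, hu1.2.2.2⟩

lemma two_children {v : {w : V // Good T X' w}} {a b : X} (ha : a ∈ X') (hb : b ∈ X')
    (hlca : T.IsLca v.val (T.leaf a) (T.leaf b)) (hab : T.leaf a ≠ T.leaf b) :
    ∃ u1 u2 : {w : V // Good T X' w}, par' T X' u1 = v ∧ u1.val ≠ v.val ∧
      par' T X' u2 = v ∧ u2.val ≠ v.val ∧ u1 ≠ u2 := by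
  have hva : v.val ≠ T.leaf a := by
    rintro h
    exact hab (T.leaf_no_desc (x := a) (by rw [← h]; exact hlca.2.1)).symm
  have hvb : v.val ≠ T.leaf b := by
    rintro h
    exact hab (T.leaf_no_desc (x := b) (by rw [← h]; exact hlca.1))
  obtain ⟨u1, hp1, hne1, hanc1, hla⟩ := exists_child T X' ha hlca.1 hva
  obtain ⟨u2, hp2, hne2, hanc2, hlb⟩ := exists_child T X' hb hlca.2.1 hvb
  refine ⟨u1, u2, hp1, hne1, hp2, hne2, ?_⟩
  rintro rfl
  have := hlca.2.2 u1.val hla hlb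
  exact hne1 (T.anc_antisymm this hanc1)

lemma two_le_ncard_aux {α : Type} [Finite α] {s : Set α} {x y : α}
    (hx : x ∈ s) (hy : y ∈ s) (hxy : x ≠ y) : 2 ≤ s.ncard := by
  have hsub : ({x, y} : Set α) ⊆ s := by
    intro z hz; rcases hz with rfl | rfl
    · exact hx
    · exact hy
  calc 2 = ({x, y} : Set α).ncard := (Set.ncard_pair hxy).symm
    _ ≤ s.ncard := Set.ncard_le_ncard hsub (Set.toFinite s)

/-- The restriction of `T` to the leaves in `X'`. -/
noncomputable def restrict (hG : {v : V | Good T X' v}.Nonempty) : PhyloTree {w : V // Good T X' w} X' where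
  fin := by have := T.fin; exact inferInstance
  root := ⟨sroot T X', sroot_good T X' hG⟩
  par := par' T X'
  par_root := Subtype.ext (spar_sroot T X' hG)
  reach := par'_reach T X' hG
  leaf := fun x => ⟨T.leaf x.val, good_leaf T X' x.prop⟩
  leaf_inj := fun x y h => Subtype.ext (T.leaf_inj (congrArg Subtype.val h))
  leaf_isLeaf := by
    intro x u h
    have hval : spar T X' u.val = T.leaf x.val := congrArg Subtype.val h
    by_cases hemp : (SAnc T X' u.val).Nonempty
    · have hmem := (spar_spec T X' hemp).1
      have : u.val = T.leaf x.val := T.leaf_no_desc (by rw [← hval]; exact hmem.2.1)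
      exact absurd (hval.trans this.symm) hmem.2.2
    · exact Subtype.ext ((spar_eq_of_empty T X' hemp).symm.trans hval)
  leaf_only := by
    intro v h
    obtain ⟨a, ha, b, hb, hlca⟩ := v.prop
    by_cases hab : T.leaf a = T.leaf b
    · rw [hab] at hlca
      exact ⟨⟨b, hb⟩, Subtype.ext (T.lca_self_eq hlca).symm⟩
    · obtain ⟨u1, _, hp1, hne1, _⟩ := two_children T X' ha hb hlca hab
      exact absurd (congrArg Subtype.val (h u1 hp1)) hne1
  root_deg := by
    obtain ⟨a, ha, b, hb, hlca⟩ := sroot_good T X' hG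
    by_cases hab : T.leaf a = T.leaf b
    · rw [hab] at hlca
      exact Or.inl ⟨⟨b, hb⟩, Subtype.ext (T.lca_self_eq hlca).symm⟩
    · obtain ⟨u1, u2, hp1, hne1, hp2, hne2, h12⟩ :=
        two_children T X' (v := ⟨sroot T X', sroot_good T X' hG⟩) ha hb hlca hab
      refine Or.inr ?_
      have := T.fin
      exact two_le_ncard_aux ⟨hp1, fun h => hne1 (congrArg Subtype.val h)⟩
        ⟨hp2, fun h => hne2 (congrArg Subtype.val h)⟩ h12
  inner_deg := by
    intro v _ hnl
    obtain ⟨a, ha, b, hb, hlca⟩ := v.prop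
    by_cases hab : T.leaf a = T.leaf b
    · rw [hab] at hlca
      exact absurd ⟨⟨b, hb⟩, Subtype.ext (T.lca_self_eq hlca).symm⟩ hnl
    · obtain ⟨u1, u2, hp1, hne1, hp2, hne2, h12⟩ := two_children T X' ha hb hlca hab
      have := T.fin
      exact two_le_ncard_aux ⟨hp1, fun h => hne1 (congrArg Subtype.val h)⟩
        ⟨hp2, fun h => hne2 (congrArg Subtype.val h)⟩ h12

@[simp] lemma restrict_par (hG : {v : V | Good T X' v}.Nonempty) : (restrict T X' hG).par = par' T X' := rfl

@[simp] lemma restrict_root (hG : {v : V | Good T X' v}.Nonempty) : (restrict T X' hG).root = ⟨sroot T X', sroot_good T X' hG⟩ := rfl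

@[simp] lemma restrict_leaf (hG : {v : V | Good T X' v}.Nonempty) (x : X') :
    (restrict T X' hG).leaf x = ⟨T.leaf x.val, good_leaf T X' x.prop⟩ := rfl

lemma anc_restrict_iff (hG : {v : V | Good T X' v}.Nonempty) {u v : {w : V // Good T X' w}} :
    (restrict T X' hG).anc u v ↔ T.anc u.val v.val := by
  constructor
  · rintro ⟨n, hn⟩
    induction n generalizing v with
    | zero => rw [← hn]; exact T.anc_refl _
    | succ n ih =>
      rw [Function.iterate_succ_apply] at hn
      exact T.anc_trans (ih hn) (spar_anc T X' v.val)
  · intro h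
    obtain ⟨k, hk⟩ : ∃ k, T.depth v.val ≤ k := ⟨T.depth v.val, le_rfl⟩
    induction k generalizing v with
    | zero =>
      by_cases huv : u = v
      · subst huv; exact ⟨0, rfl⟩
      · exfalso
        have hlt := T.depth_lt_of_anc h (fun hh => huv (Subtype.ext hh))
        omega
    | succ k ih =>
      by_cases huv : u = v
      · subst huv; exact ⟨0, rfl⟩
      · have hmem : u.val ∈ SAnc T X' v.val :=
          ⟨u.prop, h, fun hh => huv (Subtype.ext hh)⟩
        have hlt : T.depth (spar T X' v.val) < T.depth v.val := by
          have hsp := (spar_spec T X' ⟨_, hmem⟩).1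
          exact T.depth_lt_of_anc hsp.2.1 hsp.2.2
        obtain ⟨n, hn⟩ := ih (v := par' T X' v) (spar_max T X' hmem) (by simp [par']; omega)
        exact ⟨n + 1, by rw [Function.iterate_succ_apply]; exact hn⟩

lemma isLca_restrict_val (hG : {v : V | Good T X' v}.Nonempty) {l' a b : {w : V // Good T X' w}}
    (h : (restrict T X' hG).IsLca l' a b) : T.IsLca l'.val a.val b.val := by
  obtain ⟨l, hl⟩ := T.lca_exists a.val b.val
  have hlg : Good T X' l := good_lca T X' a.prop b.prop hl
  have hanc : T.anc l l'.val := by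
    have := h.2.2 ⟨l, hlg⟩ ((anc_restrict_iff T X' hG).2 hl.1)
      ((anc_restrict_iff T X' hG).2 hl.2.1)
    exact (anc_restrict_iff T X' hG).1 this
  exact ⟨(anc_restrict_iff T X' hG).1 h.1, (anc_restrict_iff T X' hG).1 h.2.1,
    fun u hua hub => T.anc_trans (hl.2.2 u hua hub) hanc⟩

lemma isLca_restrict_of (hG : {v : V | Good T X' v}.Nonempty) {l : V} (hg : Good T X' l) {a b : {w : V // Good T X' w}}
    (h : T.IsLca l a.val b.val) : (restrict T X' hG).IsLca ⟨l, hg⟩ a b :=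
  ⟨(anc_restrict_iff T X' hG).2 h.1, (anc_restrict_iff T X' hG).2 h.2.1,
    fun u hua hub => (anc_restrict_iff T X' hG).2
      (h.2.2 u.val ((anc_restrict_iff T X' hG).1 hua) ((anc_restrict_iff T X' hG).1 hub))⟩

end Restrict

end PhyloTree

/-- every induced submap of a Fitch map is a Fitch map. -/
theorem induced_submap_fitch {X M : Type} [Fintype X] [Fintype M] [Nonempty X] [Nonempty M]
    (ε : X → X → Set M) (h : IsFitchMap ε)
    (X' : Set X) (M' : Set M) (hX' : X'.Nonempty)
    (ε' : X' → X' → Set M')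
    (hind : ∀ x y : X', (x : X) ≠ (y : X) →
      ∀ m : M', (m ∈ ε' x y ↔ (m : M) ∈ ε (x : X) (y : X)))
    (hsub : ∀ x y : X', (x : X) ≠ (y : X) → ε (x : X) (y : X) ⊆ M') :
    IsFitchMap ε' := by
  classical
  obtain ⟨V, T, lab, hexp⟩ := h
  have hG : {v : V | PhyloTree.Good T X' v}.Nonempty :=
    ⟨T.leaf hX'.choose, PhyloTree.good_leaf T X' hX'.choose_spec⟩
  refine ⟨{w : V // PhyloTree.Good T X' w}, PhyloTree.restrict T X' hG,
    fun v => {m : M' | ∃ u : V,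
      T.edgeOnDown (PhyloTree.par' T X' v).val v.val u ∧ (m : M) ∈ lab u}, ?_⟩
  intro x y hxy m
  have hxyX : (x : X) ≠ (y : X) := fun hh => hxy (Subtype.ext hh)
  rw [hind x y hxyX m, hexp x.val y.val hxyX (m : M)]
  constructor
  · rintro ⟨l, hlca, u, ⟨hlu, hul, huy⟩, hm⟩
    have hGl : PhyloTree.Good T X' l :=
      PhyloTree.good_lca T X' (PhyloTree.good_leaf T X' x.prop)
        (PhyloTree.good_leaf T X' y.prop) hlca
    set S : Set V :=
      {w : V | PhyloTree.Good T X' w ∧ T.anc u w ∧ T.anc w (T.leaf y.val)} with hS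
    have hSy : T.leaf y.val ∈ S := ⟨PhyloTree.good_leaf T X' y.prop, huy, T.anc_refl _⟩
    obtain ⟨u1, hu1, hu1min⟩ := Set.exists_min_image S T.depth
      (by have := T.fin; exact Set.toFinite _) ⟨_, hSy⟩
    have hlS : l ∈ PhyloTree.SAnc T X' u1 :=
      ⟨hGl, T.anc_trans hlu hu1.2.1, fun hh => hul (T.anc_antisymm (hh ▸ hu1.2.1) hlu)⟩
    have hnotanc : ¬ T.anc u (PhyloTree.spar T X' u1) := by
      intro hcon
      have hsp := (PhyloTree.spar_spec T X' ⟨_, hlS⟩).1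
      have hmemS : PhyloTree.spar T X' u1 ∈ S :=
        ⟨hsp.1, hcon, T.anc_trans hsp.2.1 hu1.2.2⟩
      have h1 := hu1min _ hmemS
      have h2 := T.depth_lt_of_anc hsp.2.1 hsp.2.2
      omega
    have hspu : T.anc (PhyloTree.spar T X' u1) u := by
      have hsp := (PhyloTree.spar_spec T X' ⟨_, hlS⟩).1
      rcases T.anc_comparable hu1.2.1 hsp.2.1 with hc | hc
      · exact absurd hc hnotanc
      · exact hc
    have hune : u ≠ PhyloTree.spar T X' u1 := by
      intro hh
      exact hnotanc (by rw [← hh]; exact T.anc_refl u)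
    refine ⟨⟨l, hGl⟩, PhyloTree.isLca_restrict_of T X' hG hGl hlca, ⟨u1, hu1.1⟩,
      ⟨(PhyloTree.anc_restrict_iff T X' hG).2 (T.anc_trans hlu hu1.2.1),
        fun hh => hlS.2.2 (congrArg Subtype.val hh).symm,
        (PhyloTree.anc_restrict_iff T X' hG).2 hu1.2.2⟩,
      ⟨u, ⟨hspu, hune, hu1.2.1⟩, hm⟩⟩
  · rintro ⟨l', hlca', u', ⟨hlu', hul', huy'⟩, u, ⟨h1, h2, h3⟩, hm⟩
    have hlcaT : T.IsLca l'.val (T.leaf x.val) (T.leaf y.val) :=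
      PhyloTree.isLca_restrict_val T X' hG hlca'
    have hT'anc : T.anc l'.val (PhyloTree.spar T X' u'.val) := by
      obtain ⟨n, hn⟩ := hlu'
      rw [PhyloTree.restrict_par] at hn
      cases n with
      | zero => exact absurd hn hul'
      | succ n =>
        have hh : (PhyloTree.par' T X')^[n] (PhyloTree.par' T X' u') = l' := by
          rw [← Function.iterate_succ_apply]; exact hn
        exact (PhyloTree.anc_restrict_iff T X' hG).1 ⟨n, hh⟩
    have hancl_u : T.anc l'.val u := T.anc_trans hT'anc h1
    have hul : u ≠ l'.val := by
      rintro rfl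
      exact h2 (T.anc_antisymm hT'anc h1)
    have hu_y : T.anc u (T.leaf y.val) :=
      T.anc_trans h3 ((PhyloTree.anc_restrict_iff T X' hG).1 huy')
    exact ⟨l'.val, hlcaT, u, ⟨hancl_u, hul, hu_y⟩, hm⟩
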